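/- arXiv:1712.04122 — 6 statements merged into one kernel-verified Lean document; each statement's English description precedes it below -/
import Mathlib

section
/- Let V be a finite ground set, f : 2^V → ℝ a normalized (f(∅) = 0), nondecreasing, submodular set function, and k a positive integer. Let S_0 = ∅ and S_{i+1} = S_i ∪ {e_i} for i = 0, …, k−1, where e_i ∈ V \ S_i maximizes f(S_i ∪ {e}) − f(S_i) over all e ∈ V \ S_i. Then f(S_k) ≥ (1 − 1/e) · max{ f(S) : S ⊆ V, |S| ≤ k }. -/
/-!
Let `T` be any set of at most `k` elements and let `A` be the current greedy set. By
submodularity the gain `f (A ∪ T) - f A` is at most the sum of the single-element gains over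
`T \ A`, each of which is at most the greedy gain; hence the gap `f T - f A` shrinks by a factor
`1 - 1/k` at every greedy step, and after `k` steps it is at most `(1 - 1/k)^k f T ≤ e⁻¹ f T`.
-/

section

variable {α : Type*} [DecidableEq α]

def IsSubmodular (f : Finset α → ℝ) : Prop :=
  ∀ A B : Finset α, A ⊆ B → ∀ s ∉ B, f (insert s B) - f B ≤ f (insert s A) - f A

namespace IsSubmodular

open Finset

variable {f : Finset α → ℝ}

theorem sub_le_sum_sdiff_insert_sub (hsub : IsSubmodular f) (A B : Finset α) :
    f (A ∪ B) - f A ≤ ∑ x ∈ B \ A, (f (insert x A) - f A) := by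
  induction B using Finset.induction_on with
  | empty => simp
  | @insert b B hbB ih =>
    by_cases hbA : b ∈ A
    · rwa [union_insert, insert_eq_of_mem (mem_union_left _ hbA), insert_sdiff_of_mem _ hbA]
    · have hbAB : b ∉ A ∪ B := by simp [hbA, hbB]
      have hb_gain := hsub A (A ∪ B) subset_union_left b hbAB
      rw [union_insert, insert_sdiff_of_notMem _ hbA, sum_insert (by simp [hbB])]
      linarith

theorem sub_le_card_mul_of_forall_insert_sub_le (hsub : IsSubmodular f) (hmono : Monotone f)
    {A : Finset α} {a : α} (hgreedy : ∀ x ∉ A, f (insert x A) - f A ≤ f (insert a A) - f A)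
    (T : Finset α) :
    f T - f A ≤ #T * (f (insert a A) - f A) := by
  have hgain : 0 ≤ f (insert a A) - f A := sub_nonneg.2 (hmono (subset_insert a A))
  calc f T - f A ≤ f (A ∪ T) - f A := by gcongr; exact hmono subset_union_right
    _ ≤ ∑ x ∈ T \ A, (f (insert x A) - f A) := hsub.sub_le_sum_sdiff_insert_sub A T
    _ ≤ ∑ _x ∈ T \ A, (f (insert a A) - f A) :=
        sum_le_sum fun x hx => hgreedy x (mem_sdiff.1 hx).2
    _ = #(T \ A) * (f (insert a A) - f A) := by rw [sum_const, nsmul_eq_mul]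
    _ ≤ #T * (f (insert a A) - f A) := by gcongr; exact sdiff_subset

theorem sub_insert_le_one_sub_inv_mul (hsub : IsSubmodular f) (hmono : Monotone f)
    {A : Finset α} {a : α} (hgreedy : ∀ x ∉ A, f (insert x A) - f A ≤ f (insert a A) - f A)
    {k : ℕ} (hk : 0 < k) {T : Finset α} (hT : #T ≤ k) :
    f T - f (insert a A) ≤ (1 - (k : ℝ)⁻¹) * (f T - f A) := by
  have hgain : 0 ≤ f (insert a A) - f A := sub_nonneg.2 (hmono (subset_insert a A))
  have hgap : f T - f A ≤ k * (f (insert a A) - f A) :=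
    (hsub.sub_le_card_mul_of_forall_insert_sub_le hmono hgreedy T).trans (by gcongr)
  have hdiv : (f T - f A) / k ≤ f (insert a A) - f A := by
    rwa [div_le_iff₀' (by exact_mod_cast hk)]
  calc f T - f (insert a A) ≤ (f T - f A) - (f T - f A) / k := by linarith
    _ = (1 - (k : ℝ)⁻¹) * (f T - f A) := by ring

end IsSubmodular

end

theorem greedy_submodular_one_sub_inv_e_bound_general
    {V : Type*} [DecidableEq V]
    (f : Finset V → ℝ)
    (hnorm : f ∅ = 0)
    (hmono : ∀ (A : Finset V) (s : V), f (insert s A) ≥ f A)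
    (hsub : ∀ (A B : Finset V), A ⊆ B → ∀ s ∉ B,
      f (insert s A) - f A ≥ f (insert s B) - f B)
    (k : ℕ) (hk : 0 < k)
    (S : ℕ → Finset V) (e : ℕ → V)
    (hS0 : S 0 = ∅)
    (hstep : ∀ i < k, S (i + 1) = insert (e i) (S i))
    (hgreedy : ∀ i < k, ∀ x ∉ S i,
      f (insert (e i) (S i)) - f (S i) ≥ f (insert x (S i)) - f (S i)) :
    ∀ T : Finset V, T.card ≤ k →
      f (S k) ≥ (1 - (Real.exp 1)⁻¹) * f T := by
  intro T hT
  have hmono' : Monotone f := Finset.monotone_iff_forall_le_insert.2 fun A s _ => hmono A s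
  have hratio : (0 : ℝ) ≤ 1 - (k : ℝ)⁻¹ :=
    sub_nonneg.2 (inv_le_one_of_one_le₀ (by exact_mod_cast hk))
  have hgap := le_geom (u := fun i => f T - f (S i)) hratio k fun i hi => by
    simpa only [hstep i hi] using
      IsSubmodular.sub_insert_le_one_sub_inv_mul hsub hmono' (hgreedy i hi) hk hT
  have hexp : (1 - (k : ℝ)⁻¹) ^ k ≤ (Real.exp 1)⁻¹ := by
    simpa [one_div, Real.exp_neg] using
      Real.one_sub_div_pow_le_exp_neg (n := k) (t := 1) (by exact_mod_cast hk)
  have hT0 : 0 ≤ f T := hnorm ▸ hmono' (Finset.empty_subset T)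
  simp only [hS0, hnorm, sub_zero] at hgap
  linarith [mul_le_mul_of_nonneg_right hexp hT0]

/-- Nemhauser–Wolsey–Fisher (1978): the greedy algorithm for maximizing a normalized,
nondecreasing, submodular set function under a cardinality constraint `k` achieves at
least a `(1 - 1/e)` fraction of the optimal value. -/
theorem greedy_submodular_one_sub_inv_e_bound
    {V : Type*} [Fintype V] [DecidableEq V]
    (f : Finset V → ℝ)
    (hnorm : f ∅ = 0)
    (hmono : ∀ (A : Finset V) (s : V), f (insert s A) ≥ f A)
    (hsub : ∀ (A B : Finset V), A ⊆ B → ∀ s ∉ B,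
      f (insert s A) - f A ≥ f (insert s B) - f B)
    (k : ℕ) (hk : 0 < k)
    (S : ℕ → Finset V) (e : ℕ → V)
    (hS0 : S 0 = ∅)
    (hstep : ∀ i < k, S (i + 1) = insert (e i) (S i))
    (hmem : ∀ i < k, e i ∉ S i)
    (hgreedy : ∀ i < k, ∀ x ∉ S i,
      f (insert (e i) (S i)) - f (S i) ≥ f (insert x (S i)) - f (S i)) :
    ∀ T : Finset V, T.card ≤ k →
      f (S k) ≥ (1 - (Real.exp 1)⁻¹) * f T :=
  greedy_submodular_one_sub_inv_e_bound_general f hnorm hmono hsub k hk S e hS0 hstep hgreedy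
end

section
/- Let V be a finite ground set and f : 2^V → ℝ a nonnegative, nondecreasing, normalized set function. Suppose γ, α ∈ (0, 1] are such that (i) ∑_{ω ∈ Ω \ S} ρ_ω(S) ≥ γ · ρ_Ω(S) for all Ω, S ⊆ V, and (ii) ρ_j((S \ {j}) ∪ Ω) ≥ (1 − α) · ρ_j(S \ {j}) for all Ω, S ⊆ V and all j ∈ S \ Ω. Let k be a positive integer and let S_0 = ∅, S_{i+1} = S_i ∪ {e_i}, where e_i ∈ V \ S_i maximizes f(S_i ∪ {e}) − f(S_i) over e ∈ V \ S_i, for i = 0, …, k−1. Then f(S_k) ≥ (1/α)·(1 − e^{−αγ}) · max{ f(S) : S ⊆ V, |S| ≤ k }. -/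
/-!
Let `ρ i = f (S (i + 1)) - f (S i)` be the greedy gains and `T` a competitor with `#T ≤ k`.
Curvature bounds `f (S i ∪ T) - f (S i)` from below by `D i = f T - ∑_{j<i} c j * ρ j`, where
`c j = 1` if `e j ∈ T` and `c j = α` otherwise; the submodularity ratio and the greedy choice then
give `γ * D i ≤ (k - m i) * ρ i`, where `m i` counts the steps before `i` that picked from `T`.
Backward induction over these linear constraints, using only `1 - x ≤ exp (-x)`, shows
`greedyRatio α γ (k - i) (k - m i) * D i ≤ ∑_{i ≤ j < k} ρ j`; at `i = 0` this is the bound.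
-/

open Real Finset

/-- The share of the residual `D` that `n` remaining greedy steps are guaranteed to collect when
the competitor still has at most `r` elements not yet picked. -/
noncomputable def greedyRatio (α γ n r : ℝ) : ℝ := 1 / α * (1 - exp (-(α * γ * n / r)))

section greedyRatio

variable {α γ n r : ℝ}

@[simp]
theorem greedyRatio_zero_left : greedyRatio α γ 0 r = 0 := by
  simp [greedyRatio]

theorem greedyRatio_self (hr : r ≠ 0) : greedyRatio α γ r r = 1 / α * (1 - exp (-(α * γ))) := by
  rw [greedyRatio, mul_div_assoc, div_self hr, mul_one]

theorem greedyRatio_nonneg (hα : 0 < α) (hγ : 0 ≤ γ) (hn : 0 ≤ n) (hr : 0 ≤ r) :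
    0 ≤ greedyRatio α γ n r := by
  have : exp (-(α * γ * n / r)) ≤ 1 := exp_le_one_iff.mpr (by simp only [neg_nonpos]; positivity)
  exact mul_nonneg (by positivity) (sub_nonneg.mpr this)

theorem greedyRatio_le (hα : 0 < α) : greedyRatio α γ n r ≤ γ * n / r := by
  have := one_sub_le_exp_neg (α * γ * n / r)
  calc greedyRatio α γ n r ≤ 1 / α * (α * γ * n / r) := by
        unfold greedyRatio; gcongr; linarith
    _ = γ * n / r := by field_simp

theorem greedyRatio_le_one (hα : 0 < α) (hγ1 : γ ≤ 1) (hn : 0 ≤ n) (hnr : n ≤ r) :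
    greedyRatio α γ n r ≤ 1 := by
  refine (greedyRatio_le hα).trans ?_
  rcases hn.eq_or_lt with rfl | hn
  · simp
  rw [div_le_one (hn.trans_le hnr)]
  nlinarith

theorem greedyRatio_le_recursion (hα : 0 < α) (hr : 0 < r) :
    greedyRatio α γ n r ≤ γ / r + greedyRatio α γ (n - 1) r * (1 - α * (γ / r)) := by
  have hsplit : exp (-(α * γ * n / r)) = exp (-(α * γ * (n - 1) / r)) * exp (-(α * γ / r)) := by
    rw [← exp_add]; congr 1; field_simp; ring
  have hexp := one_sub_le_exp_neg (α * γ / r)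
  have : exp (-(α * γ * (n - 1) / r)) * (1 - α * γ / r) ≤ exp (-(α * γ * n / r)) := by
    rw [hsplit]; gcongr
  unfold greedyRatio
  field_simp at this ⊢
  linear_combination this

theorem exp_neg_mul_one_sub_add_le (hα0 : 0 < α) (hα1 : α ≤ 1) (hγ0 : 0 ≤ γ) (hγ1 : γ ≤ 1)
    (hn : 1 ≤ n) (hnr : n ≤ r) (hr : 1 < r) :
    exp (-(α * γ * (n - 1) / (r - 1))) * (1 - γ / r) + (1 - α) * (γ / r) ≤
      exp (-(α * γ * n / r)) := by
  -- the exponent `α * γ * n / r` splits as `a + δ`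
  set a := α * γ * (n - 1) / (r - 1)
  set δ := α * γ * (r - n) / (r * (r - 1))
  have hr0 : 0 < r := by linarith
  have hr1 : 0 < r - 1 := by linarith
  have hsplit : exp (-(α * γ * n / r)) = exp (-a) * exp (-δ) := by
    rw [← exp_add]; congr 1; simp only [a, δ]; field_simp; ring
  have hδ : 0 ≤ γ / r - δ := by
    have : γ / r - δ = γ * (r - 1 - α * (r - n)) / (r * (r - 1)) := by simp only [δ]; field_simp
    rw [this]
    apply div_nonneg (mul_nonneg hγ0 _) (by positivity)
    nlinarith
  have hpoly : (1 - α) * (γ / r) ≤ (1 - a) * (γ / r - δ) := by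
    have hid : (1 - a) * (γ / r - δ) - (1 - α) * (γ / r) =
        α * γ * ((r - 1) * (n - 1) * (1 - γ) + α * γ * (n - 1) * (r - n)) / (r * (r - 1) ^ 2) := by
      simp only [a, δ]; field_simp; ring
    have h₁ := mul_nonneg (mul_nonneg hr1.le (sub_nonneg.2 hn)) (sub_nonneg.2 hγ1)
    have h₂ := mul_nonneg (mul_nonneg (mul_nonneg hα0.le hγ0) (sub_nonneg.2 hn)) (sub_nonneg.2 hnr)
    have hnum : 0 ≤ (r - 1) * (n - 1) * (1 - γ) + α * γ * (n - 1) * (r - n) := by linarith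
    have : 0 ≤ (1 - a) * (γ / r - δ) - (1 - α) * (γ / r) := by rw [hid]; positivity
    linarith
  -- `exp (-a) ≥ 1 - a` and `exp (-δ) ≥ 1 - δ` reduce the claim to `hpoly`.
  calc exp (-a) * (1 - γ / r) + (1 - α) * (γ / r)
      ≤ exp (-a) * (1 - γ / r) + (1 - a) * (γ / r - δ) := by gcongr
    _ ≤ exp (-a) * (1 - γ / r) + exp (-a) * (γ / r - δ) := by
      gcongr; simpa using one_sub_le_exp_neg a
    _ = exp (-a) * (1 - δ) := by ring
    _ ≤ exp (-a) * exp (-δ) := by gcongr; exact one_sub_le_exp_neg δ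
    _ = exp (-(α * γ * n / r)) := hsplit.symm

theorem greedyRatio_le_recursion_pred (hα0 : 0 < α) (hα1 : α ≤ 1) (hγ0 : 0 ≤ γ) (hγ1 : γ ≤ 1)
    (hn : 1 ≤ n) (hnr : n ≤ r) :
    greedyRatio α γ n r ≤ γ / r + greedyRatio α γ (n - 1) (r - 1) * (1 - γ / r) := by
  rcases (hn.trans hnr).eq_or_lt with rfl | hr
  · obtain rfl : n = 1 := le_antisymm hnr hn
    simpa [greedyRatio] using greedyRatio_le (γ := γ) (n := 1) (r := 1) hα0
  have := exp_neg_mul_one_sub_add_le hα0 hα1 hγ0 hγ1 hn hnr hr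
  unfold greedyRatio
  field_simp at this ⊢
  linear_combination this

end greedyRatio

theorem mul_le_add_of_recursion {Ψ Ψ' q c D ρ G : ℝ} (hΨ : Ψ ≤ q + Ψ' * (1 - c * q)) (hΨ0 : 0 ≤ Ψ)
    (hcΨ' : c * Ψ' ≤ 1) (hqD : q * D ≤ ρ) (hG : Ψ' * (D - c * ρ) ≤ G) (hρG : 0 ≤ ρ + G) :
    Ψ * D ≤ ρ + G := by
  rcases le_or_gt D 0 with hD | hD
  · nlinarith
  calc Ψ * D ≤ (q + Ψ' * (1 - c * q)) * D := by gcongr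
    _ = q * D * (1 - c * Ψ') + Ψ' * D := by ring
    _ ≤ ρ * (1 - c * Ψ') + Ψ' * D := by gcongr
    _ = ρ + Ψ' * (D - c * ρ) := by ring
    _ ≤ ρ + G := by gcongr

theorem greedyRatio_mul_le_add_of_step {α γ : ℝ} (hα0 : 0 < α) (hα1 : α ≤ 1) (hγ0 : 0 ≤ γ)
    (hγ1 : γ ≤ 1) {k i m : ℕ} (hik : i < k) (hmi : m ≤ i) (b : Prop) [Decidable b] {D ρ G : ℝ}
    (hgain : γ * D ≤ (k - m) * ρ) (hρG : 0 ≤ ρ + G)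
    (hnext : greedyRatio α γ (k - (i + 1 : ℕ)) (k - (m + if b then 1 else 0 : ℕ)) *
      (D - (if b then 1 else α) * ρ) ≤ G) :
    greedyRatio α γ (k - i) (k - m) * D ≤ ρ + G := by
  have hr : (0 : ℝ) < k - m := sub_pos.mpr (by exact_mod_cast hmi.trans_lt hik)
  have hn : (1 : ℝ) ≤ k - i := le_sub_iff_add_le'.mpr (by exact_mod_cast hik)
  have hnr : (k : ℝ) - i ≤ k - m := sub_le_sub_left (by exact_mod_cast hmi) _
  have hn' : (0 : ℝ) ≤ k - (i + 1 : ℕ) := sub_nonneg.mpr (by exact_mod_cast hik)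
  have hnr' : (k : ℝ) - (i + 1 : ℕ) ≤ k - (m + if b then 1 else 0 : ℕ) :=
    sub_le_sub_left (by exact_mod_cast add_le_add hmi (by split_ifs <;> simp)) _
  have hi1 : (k : ℝ) - (i + 1 : ℕ) = k - i - 1 := by push_cast; ring
  have hrec : greedyRatio α γ (k - i) (k - m) ≤ γ / (k - m) +
      greedyRatio α γ (k - (i + 1 : ℕ)) (k - (m + if b then 1 else 0 : ℕ)) *
        (1 - (if b then 1 else α) * (γ / (k - m))) := by
    rw [hi1]
    by_cases hb : b
    · simpa [hb, sub_add_eq_sub_sub] using greedyRatio_le_recursion_pred hα0 hα1 hγ0 hγ1 hn hnr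
    · simpa [hb] using greedyRatio_le_recursion (γ := γ) hα0 hr
  have hc : (if b then 1 else α) ≤ 1 := by split_ifs <;> simp [hα1]
  have hqD : γ / (k - m) * D ≤ ρ := by
    rw [div_mul_eq_mul_div, div_le_iff₀ hr]; linarith
  exact mul_le_add_of_recursion hrec (greedyRatio_nonneg hα0 hγ0 (by linarith) hr.le)
    (mul_le_one₀ hc (greedyRatio_nonneg hα0 hγ0 hn' (hn'.trans hnr'))
      (greedyRatio_le_one hα0 hγ1 hn' hnr')) hqD hnext hρG

theorem greedyRatio_mul_le_sum {α γ : ℝ} (hα0 : 0 < α) (hα1 : α ≤ 1) (hγ0 : 0 ≤ γ) (hγ1 : γ ≤ 1)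
    {k : ℕ} (hk : k ≠ 0) (p : ℕ → Prop) [DecidablePred p] {ρ : ℕ → ℝ} {d : ℝ}
    (hρ : ∀ i < k, 0 ≤ ρ i)
    (hgain : ∀ i < k, γ * (d - ∑ j ∈ range i, (if p j then 1 else α) * ρ j) ≤
      (k - #{j ∈ range i | p j}) * ρ i) :
    1 / α * (1 - exp (-(α * γ))) * d ≤ ∑ i ∈ range k, ρ i := by
  set m : ℕ → ℕ := fun i => #{j ∈ range i | p j}
  set D : ℕ → ℝ := fun i => d - ∑ j ∈ range i, (if p j then 1 else α) * ρ j
  have hD : ∀ i, D (i + 1) = D i - (if p i then 1 else α) * ρ i := fun i => by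
    simp only [D, sum_range_succ]; ring
  have hm : ∀ i, m (i + 1) = m i + if p i then 1 else 0 := fun i => by
    simp only [m, range_add_one, filter_insert]
    split_ifs with hp <;> simp [card_insert_of_notMem]
  have hmi : ∀ i, m i ≤ i := fun i => (card_filter_le _ _).trans (card_range i).le
  have key : ∀ i (hi : i ≤ k),
      greedyRatio α γ (k - i) (k - m i) * D i ≤ ∑ j ∈ Ico i k, ρ j := by
    intro i hi
    induction hi using Nat.decreasingInduction with
    | self => simp
    | of_succ i hik ih =>
      rw [sum_eq_sum_Ico_succ_bot hik]
      refine greedyRatio_mul_le_add_of_step hα0 hα1 hγ0 hγ1 hik (hmi i) (p i) (hgain i hik)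
        (add_nonneg (hρ i hik) (sum_nonneg fun j hj => hρ j (mem_Ico.1 hj).2)) ?_
      rwa [← hm, ← hD]
  simpa [m, D, greedyRatio_self (Nat.cast_ne_zero.mpr hk)] using key 0 k.zero_le

section SetFunction

variable {V : Type*} [DecidableEq V]

def HasSubmodularityRatioAtLeast (f : Finset V → ℝ) (γ : ℝ) : Prop :=
  ∀ Ω S : Finset V, ∑ ω ∈ Ω \ S, (f (insert ω S) - f S) ≥ γ * (f (S ∪ Ω) - f S)

def HasCurvatureAtMost (f : Finset V → ℝ) (α : ℝ) : Prop :=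
  ∀ Ω S : Finset V, ∀ j ∈ S \ Ω, f (S ∪ Ω) - f ((S.erase j) ∪ Ω) ≥ (1 - α) * (f S - f (S.erase j))

variable {f : Finset V → ℝ}

theorem HasSubmodularityRatioAtLeast.mul_sub_le_card_mul {γ : ℝ}
    (hf : HasSubmodularityRatioAtLeast f γ) {A : Finset V} (T : Finset V) {x : V}
    (hx : ∀ y ∉ A, f (insert y A) - f A ≤ f (insert x A) - f A) :
    γ * (f (A ∪ T) - f A) ≤ #(T \ A) * (f (insert x A) - f A) := by
  calc γ * (f (A ∪ T) - f A) ≤ ∑ ω ∈ T \ A, (f (insert ω A) - f A) := hf T A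
    _ ≤ #(T \ A) • (f (insert x A) - f A) :=
      sum_le_card_nsmul _ _ _ fun y hy => hx y (mem_sdiff.mp hy).2
    _ = #(T \ A) * (f (insert x A) - f A) := nsmul_eq_mul _ _

theorem HasCurvatureAtMost.mul_sub_le_sub_union {α : ℝ} (hf : HasCurvatureAtMost f α)
    {A T : Finset V} {x : V} (hxA : x ∉ A) (hxT : x ∉ T) :
    (1 - α) * (f (insert x A) - f A) ≤ f (insert x A ∪ T) - f (A ∪ T) := by
  simpa [erase_insert hxA] using hf T (insert x A) x (mem_sdiff.mpr ⟨mem_insert_self x A, hxT⟩)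

variable {S : ℕ → Finset V} {e : ℕ → V} {k : ℕ}

theorem greedy_mem_of_lt (hstep : ∀ i < k, S (i + 1) = insert (e i) (S i)) {i j : ℕ} (hji : j < i)
    (hik : i ≤ k) : e j ∈ S i := by
  induction i with
  | zero => omega
  | succ i ih =>
    rw [hstep i hik]
    rcases (Nat.lt_succ_iff.mp hji).eq_or_lt with rfl | hji
    · exact mem_insert_self _ _
    · exact mem_insert_of_mem (ih hji (by omega))

theorem greedy_injOn (hstep : ∀ i < k, S (i + 1) = insert (e i) (S i))
    (hmem : ∀ i < k, e i ∉ S i) : Set.InjOn e (range k) := by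
  intro a ha b hb hab
  simp only [coe_range, Set.mem_Iio] at ha hb
  by_contra hne
  rcases Nat.lt_or_gt_of_ne hne with h | h
  · exact hmem b hb (hab ▸ greedy_mem_of_lt hstep h hb.le)
  · exact hmem a ha (hab ▸ greedy_mem_of_lt hstep h ha.le)

theorem card_filter_add_card_sdiff_le (hstep : ∀ i < k, S (i + 1) = insert (e i) (S i))
    (hmem : ∀ i < k, e i ∉ S i) (T : Finset V) {i : ℕ} (hik : i ≤ k) :
    #{j ∈ range i | e j ∈ T} + #(T \ S i) ≤ #T := by
  have : #{j ∈ range i | e j ∈ T} ≤ #(T ∩ S i) := by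
    refine card_le_card_of_injOn e (fun j hj => ?_) ((greedy_injOn hstep hmem).mono
      (coe_subset.mpr ((filter_subset _ _).trans (range_subset_range.mpr hik))))
    rw [mem_coe, mem_filter, mem_range] at hj
    exact mem_inter.mpr ⟨hj.2, greedy_mem_of_lt hstep hj.1 hik⟩
  have := card_sdiff_add_card_inter T (S i)
  omega

theorem HasCurvatureAtMost.sub_sum_le_union_sub {α : ℝ} (hf : HasCurvatureAtMost f α)
    (hnorm : f ∅ = 0) (hS0 : S 0 = ∅) (hstep : ∀ i < k, S (i + 1) = insert (e i) (S i))
    (hmem : ∀ i < k, e i ∉ S i) (T : Finset V) {i : ℕ} (hik : i ≤ k) :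
    f T - ∑ j ∈ range i, (if e j ∈ T then 1 else α) * (f (S (j + 1)) - f (S j)) ≤
      f (S i ∪ T) - f (S i) := by
  induction i with
  | zero => simp [hS0, hnorm]
  | succ i ih =>
    have hi : i < k := hik
    specialize ih hi.le
    rw [sum_range_succ, hstep i hi]
    by_cases he : e i ∈ T
    · rw [insert_union, insert_eq_of_mem (mem_union_right _ he), if_pos he]
      linarith
    · have := hf.mul_sub_le_sub_union (T := T) (hmem i hi) he
      rw [if_neg he]
      linarith

end SetFunction

theorem greedy_nonsubmodular_bound_general
    {V : Type*} [DecidableEq V]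
    (f : Finset V → ℝ)
    (hnorm : f ∅ = 0)
    (hmono : ∀ (A : Finset V) (s : V), f (insert s A) ≥ f A)
    (γ α : ℝ) (hγ0 : 0 < γ) (hγ1 : γ ≤ 1) (hα0 : 0 < α) (hα1 : α ≤ 1)
    (hratio : ∀ Ω S : Finset V,
      ∑ ω ∈ Ω \ S, (f (insert ω S) - f S) ≥ γ * (f (S ∪ Ω) - f S))
    (hcurv : ∀ Ω S : Finset V, ∀ j ∈ S \ Ω,
      f (S ∪ Ω) - f ((S.erase j) ∪ Ω) ≥ (1 - α) * (f S - f (S.erase j)))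
    (k : ℕ) (hk : 0 < k)
    (S : ℕ → Finset V) (e : ℕ → V)
    (hS0 : S 0 = ∅)
    (hstep : ∀ i < k, S (i + 1) = insert (e i) (S i))
    (hmem : ∀ i < k, e i ∉ S i)
    (hgreedy : ∀ i < k, ∀ x ∉ S i,
      f (insert (e i) (S i)) - f (S i) ≥ f (insert x (S i)) - f (S i)) :
    ∀ T : Finset V, T.card ≤ k →
      f (S k) ≥ (1 / α) * (1 - Real.exp (-(α * γ))) * f T := by
  intro T hT
  have hgain_nonneg : ∀ i < k, 0 ≤ f (S (i + 1)) - f (S i) := fun i hi => by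
    rw [hstep i hi]; linarith [hmono (S i) (e i)]
  have hbound := greedyRatio_mul_le_sum hα0 hα1 hγ0.le hγ1 hk.ne' (fun j => e j ∈ T) hgain_nonneg
    fun i hi => by
      have hcard : (#(T \ S i) : ℝ) ≤ k - #{j ∈ range i | e j ∈ T} := by
        rw [le_sub_iff_add_le']
        exact_mod_cast (card_filter_add_card_sdiff_le hstep hmem T hi.le).trans hT
      calc _ ≤ γ * (f (S i ∪ T) - f (S i)) :=
            mul_le_mul_of_nonneg_left
              (HasCurvatureAtMost.sub_sum_le_union_sub hcurv hnorm hS0 hstep hmem T hi.le) hγ0.le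
        _ ≤ #(T \ S i) * (f (S (i + 1)) - f (S i)) := by
            rw [hstep i hi]
            exact HasSubmodularityRatioAtLeast.mul_sub_le_card_mul hratio T (hgreedy i hi)
        _ ≤ _ := mul_le_mul_of_nonneg_right hcard (hgain_nonneg i hi)
  rwa [sum_range_sub (fun i => f (S i)), hS0, hnorm, sub_zero] at hbound

/-- Bian et al. (2017): greedy guarantee for maximizing a nonnegative, nondecreasing,
normalized set function with submodularity ratio at least `γ` and curvature at most `α`:
the greedy solution achieves at least a `(1/α)·(1 - e^{-αγ})` fraction of the optimum. -/
theorem greedy_nonsubmodular_bound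
    {V : Type*} [Fintype V] [DecidableEq V]
    (f : Finset V → ℝ)
    (hnonneg : ∀ A : Finset V, 0 ≤ f A)
    (hnorm : f ∅ = 0)
    (hmono : ∀ (A : Finset V) (s : V), f (insert s A) ≥ f A)
    (γ α : ℝ) (hγ0 : 0 < γ) (hγ1 : γ ≤ 1) (hα0 : 0 < α) (hα1 : α ≤ 1)
    (hratio : ∀ Ω S : Finset V,
      ∑ ω ∈ Ω \ S, (f (insert ω S) - f S) ≥ γ * (f (S ∪ Ω) - f S))
    (hcurv : ∀ Ω S : Finset V, ∀ j ∈ S \ Ω,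
      f (S ∪ Ω) - f ((S.erase j) ∪ Ω) ≥ (1 - α) * (f S - f (S.erase j)))
    (k : ℕ) (hk : 0 < k)
    (S : ℕ → Finset V) (e : ℕ → V)
    (hS0 : S 0 = ∅)
    (hstep : ∀ i < k, S (i + 1) = insert (e i) (S i))
    (hmem : ∀ i < k, e i ∉ S i)
    (hgreedy : ∀ i < k, ∀ x ∉ S i,
      f (insert (e i) (S i)) - f (S i) ≥ f (insert x (S i)) - f (S i)) :
    ∀ T : Finset V, T.card ≤ k →
      f (S k) ≥ (1 / α) * (1 - Real.exp (-(α * γ))) * f T :=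
  greedy_nonsubmodular_bound_general f hnorm hmono γ α hγ0 hγ1 hα0 hα1 hratio hcurv k hk S e hS0
    hstep hmem hgreedy
end

section
/- Let V be a nonempty finite index set and for each ω ∈ V let W_ω be an n×n real symmetric positive semidefinite matrix; set W_S := ∑_{ω ∈ S} W_ω and f(S) := λ_n(W_S). Assume max_{ω ∈ V} λ_1(W_ω) > 0 and let γ₀ := (min_{ω ∈ V} λ_n(W_ω)) / (max_{ω ∈ V} λ_1(W_ω)). Then for all Ω, S ⊆ V: ∑_{ω ∈ Ω \ S} [f(S ∪ {ω}) − f(S)] ≥ γ₀ · [f(S ∪ Ω) − f(S)]. In particular, the submodularity ratio of f is at least γ₀. -/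
open Classical in
/-- Smallest eigenvalue of a real symmetric matrix (junk value `0` if not symmetric). -/
noncomputable def lambdaMin {n : ℕ} (M : Matrix (Fin n) (Fin n) ℝ) : ℝ :=
  if h : M.IsHermitian then ⨅ i, h.eigenvalues i else 0

open Classical in
/-- Largest eigenvalue of a real symmetric matrix (junk value `0` if not symmetric). -/
noncomputable def lambdaMax {n : ℕ} (M : Matrix (Fin n) (Fin n) ℝ) : ℝ :=
  if h : M.IsHermitian then ⨆ i, h.eigenvalues i else 0

/-!
Weyl's inequalities `λ_min A + λ_min B ≤ λ_min (A + B) ≤ λ_min A + λ_max B` bound every marginal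
gain `f (S ∪ {ω}) - f S` below by `λ_min W_ω ≥ min_ω λ_min W_ω`, and the joint gain
`f (S ∪ Ω) - f S` above by `λ_max W_{Ω \ S} ≤ |Ω \ S| · max_ω λ_max W_ω`. Both inequalities, and the
subadditivity of `λ_max`, follow from `c ≤ λ_min M ↔ M - c • 1 ⪰ 0` and
`λ_max M ≤ c ↔ c • 1 - M ⪰ 0`, which turn them into sums of positive semidefinite matrices.
-/

open scoped ComplexOrder

namespace Matrix.IsHermitian

variable {𝕜 ι : Type*} [RCLike 𝕜] [Fintype ι] [DecidableEq ι] {A : Matrix ι ι 𝕜}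

theorem posSemidef_iff_spectrum_real_nonneg (hA : A.IsHermitian) :
    A.PosSemidef ↔ ∀ x ∈ spectrum ℝ A, 0 ≤ x := by
  simp [hA.posSemidef_iff_eigenvalues_nonneg, hA.spectrum_real_eq_range_eigenvalues, Pi.le_def]

theorem posSemidef_sub_smul_one_iff (hA : A.IsHermitian) (c : ℝ) :
    (A - c • 1).PosSemidef ↔ ∀ i, c ≤ hA.eigenvalues i := by
  have hc : (c • 1 : Matrix ι ι 𝕜).IsHermitian := by simp [IsHermitian]
  rw [posSemidef_iff_spectrum_real_nonneg (hA.sub hc), ← Algebra.algebraMap_eq_smul_one,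
    ← spectrum.sub_singleton_eq, hA.spectrum_real_eq_range_eigenvalues]
  simp

theorem posSemidef_smul_one_sub_iff (hA : A.IsHermitian) (c : ℝ) :
    (c • 1 - A).PosSemidef ↔ ∀ i, hA.eigenvalues i ≤ c := by
  have hc : (c • 1 : Matrix ι ι 𝕜).IsHermitian := by simp [IsHermitian]
  rw [posSemidef_iff_spectrum_real_nonneg (hc.sub hA), ← Algebra.algebraMap_eq_smul_one,
    ← spectrum.singleton_sub_eq, hA.spectrum_real_eq_range_eigenvalues]
  simp

end Matrix.IsHermitian

theorem Matrix.isHermitian_sum {ι α m : Type*} [AddCommMonoid α] [StarAddMonoid α] (s : Finset ι)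
    {W : ι → Matrix m m α} (hW : ∀ i ∈ s, (W i).IsHermitian) : (∑ i ∈ s, W i).IsHermitian :=
  isSelfAdjoint_sum s hW

section ExtremeEigenvalues

open Matrix

variable {n : ℕ} {A B M : Matrix (Fin n) (Fin n) ℝ}

theorem lambdaMin_le_eigenvalues (hM : M.IsHermitian) (i : Fin n) :
    lambdaMin M ≤ hM.eigenvalues i := by
  rw [lambdaMin, dif_pos hM]
  exact ciInf_le (Set.finite_range _).bddBelow i

theorem eigenvalues_le_lambdaMax (hM : M.IsHermitian) (i : Fin n) :
    hM.eigenvalues i ≤ lambdaMax M := by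
  rw [lambdaMax, dif_pos hM]
  exact le_ciSup (Set.finite_range _).bddAbove i

theorem le_lambdaMin_iff (hn : 0 < n) (hM : M.IsHermitian) {c : ℝ} :
    c ≤ lambdaMin M ↔ (M - c • 1).PosSemidef := by
  have : Nonempty (Fin n) := Fin.pos_iff_nonempty.mp hn
  rw [lambdaMin, dif_pos hM, le_ciInf_iff (Set.finite_range _).bddBelow,
    hM.posSemidef_sub_smul_one_iff]

theorem lambdaMax_le_iff (hn : 0 < n) (hM : M.IsHermitian) {c : ℝ} :
    lambdaMax M ≤ c ↔ (c • 1 - M).PosSemidef := by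
  have : Nonempty (Fin n) := Fin.pos_iff_nonempty.mp hn
  rw [lambdaMax, dif_pos hM, ciSup_le_iff (Set.finite_range _).bddAbove,
    hM.posSemidef_smul_one_sub_iff]

theorem posSemidef_sub_lambdaMin_smul_one (hM : M.IsHermitian) :
    (M - lambdaMin M • 1).PosSemidef :=
  (hM.posSemidef_sub_smul_one_iff _).2 (lambdaMin_le_eigenvalues hM)

theorem posSemidef_lambdaMax_smul_one_sub (hM : M.IsHermitian) :
    (lambdaMax M • 1 - M).PosSemidef :=
  (hM.posSemidef_smul_one_sub_iff _).2 (eigenvalues_le_lambdaMax hM)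

theorem Matrix.PosSemidef.lambdaMin_nonneg (hM : M.PosSemidef) : 0 ≤ lambdaMin M := by
  rw [lambdaMin, dif_pos hM.1]
  exact Real.iInf_nonneg hM.eigenvalues_nonneg

theorem lambdaMin_add_lambdaMin_le_lambdaMin_add (hn : 0 < n) (hA : A.IsHermitian)
    (hB : B.IsHermitian) : lambdaMin A + lambdaMin B ≤ lambdaMin (A + B) := by
  rw [le_lambdaMin_iff hn (hA.add hB), add_smul, add_sub_add_comm]
  exact (posSemidef_sub_lambdaMin_smul_one hA).add (posSemidef_sub_lambdaMin_smul_one hB)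

theorem lambdaMin_add_le_lambdaMin_add_lambdaMax (hn : 0 < n) (hA : A.IsHermitian)
    (hB : B.IsHermitian) : lambdaMin (A + B) ≤ lambdaMin A + lambdaMax B := by
  rw [← sub_le_iff_le_add, le_lambdaMin_iff hn hA, sub_smul]
  convert (posSemidef_sub_lambdaMin_smul_one (hA.add hB)).add
    (posSemidef_lambdaMax_smul_one_sub hB) using 1
  abel

theorem lambdaMax_sum_le {ι : Type*} (hn : 0 < n) (s : Finset ι)
    {W : ι → Matrix (Fin n) (Fin n) ℝ} (hW : ∀ i ∈ s, (W i).IsHermitian) :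
    lambdaMax (∑ i ∈ s, W i) ≤ ∑ i ∈ s, lambdaMax (W i) := by
  rw [lambdaMax_le_iff hn (isHermitian_sum s hW), Finset.sum_smul, ← Finset.sum_sub_distrib]
  exact posSemidef_sum s fun i hi => posSemidef_lambdaMax_smul_one_sub (hW i hi)

end ExtremeEigenvalues

section Gramian

variable {n : ℕ} {V : Type*} [DecidableEq V] {W : V → Matrix (Fin n) (Fin n) ℝ}

theorem lambdaMin_le_lambdaMin_sum_insert_sub (hn : 0 < n) (hW : ∀ ω, (W ω).IsHermitian)
    {S : Finset V} {ω : V} (hω : ω ∉ S) :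
    lambdaMin (W ω) ≤ lambdaMin (∑ i ∈ insert ω S, W i) - lambdaMin (∑ i ∈ S, W i) := by
  rw [Finset.sum_insert hω, le_sub_iff_add_le]
  exact lambdaMin_add_lambdaMin_le_lambdaMin_add hn (hW ω)
    (Matrix.isHermitian_sum S fun i _ => hW i)

theorem lambdaMin_sum_union_sub_le (hn : 0 < n) (hW : ∀ ω, (W ω).IsHermitian) (S Ω : Finset V) :
    lambdaMin (∑ i ∈ S ∪ Ω, W i) - lambdaMin (∑ i ∈ S, W i) ≤
      ∑ ω ∈ Ω \ S, lambdaMax (W ω) := by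
  rw [← Finset.union_sdiff_self_eq_union, Finset.sum_union Finset.disjoint_sdiff,
    sub_le_iff_le_add']
  refine (lambdaMin_add_le_lambdaMin_add_lambdaMax hn
    (Matrix.isHermitian_sum S fun i _ => hW i)
    (Matrix.isHermitian_sum (Ω \ S) fun i _ => hW i)).trans ?_
  gcongr
  exact lambdaMax_sum_le hn _ fun i _ => hW i

end Gramian

theorem lambdaMin_gramian_submodularity_ratio_general
    {n : ℕ} (hn : 0 < n) {V : Type*} [Fintype V] [DecidableEq V]
    (W : V → Matrix (Fin n) (Fin n) ℝ) (hW : ∀ ω, (W ω).PosSemidef)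
    (hmax : 0 < ⨆ ω : V, lambdaMax (W ω)) :
    ∀ Ω S : Finset V,
      ∑ ω ∈ Ω \ S, (lambdaMin (∑ i ∈ insert ω S, W i) - lambdaMin (∑ i ∈ S, W i)) ≥
        ((⨅ ω : V, lambdaMin (W ω)) / (⨆ ω : V, lambdaMax (W ω))) *
          (lambdaMin (∑ i ∈ S ∪ Ω, W i) - lambdaMin (∑ i ∈ S, W i)) := by
  intro Ω S
  set m := ⨅ ω : V, lambdaMin (W ω)
  set M := ⨆ ω : V, lambdaMax (W ω)
  have hm : 0 ≤ m := Real.iInf_nonneg fun ω => (hW ω).lambdaMin_nonneg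
  have hM : M ≠ 0 := hmax.ne'
  have hHerm : ∀ ω, (W ω).IsHermitian := fun ω => (hW ω).1
  calc m / M * (lambdaMin (∑ i ∈ S ∪ Ω, W i) - lambdaMin (∑ i ∈ S, W i))
      ≤ m / M * ∑ ω ∈ Ω \ S, lambdaMax (W ω) := by
        gcongr; exact lambdaMin_sum_union_sub_le hn hHerm S Ω
    _ ≤ m / M * ((Ω \ S).card • M) := by
        gcongr; exact Finset.sum_le_card_nsmul _ _ _ fun ω _ =>
          le_ciSup (f := fun ω => lambdaMax (W ω)) (Set.finite_range _).bddAbove ω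
    _ = (Ω \ S).card • m := by rw [nsmul_eq_mul, nsmul_eq_mul]; field_simp
    _ ≤ ∑ ω ∈ Ω \ S, lambdaMin (W ω) :=
        Finset.card_nsmul_le_sum _ _ _ fun ω _ =>
          ciInf_le (f := fun ω => lambdaMin (W ω)) (Set.finite_range _).bddBelow ω
    _ ≤ _ := Finset.sum_le_sum fun ω hω =>
        lambdaMin_le_lambdaMin_sum_insert_sub hn hHerm (Finset.mem_sdiff.mp hω).2

/-- Lower bound `γ₀ = min_ω λ_min(W_ω) / max_ω λ_max(W_ω)` on the submodularity ratio of
the set function `S ↦ λ_min(W_S)` with `W_S = ∑_{ω ∈ S} W_ω`. -/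
theorem lambdaMin_gramian_submodularity_ratio
    {n : ℕ} (hn : 0 < n) {V : Type*} [Fintype V] [DecidableEq V] [Nonempty V]
    (W : V → Matrix (Fin n) (Fin n) ℝ) (hW : ∀ ω, (W ω).PosSemidef)
    (hmax : 0 < ⨆ ω : V, lambdaMax (W ω)) :
    ∀ Ω S : Finset V,
      ∑ ω ∈ Ω \ S, (lambdaMin (∑ i ∈ insert ω S, W i) - lambdaMin (∑ i ∈ S, W i)) ≥
        ((⨅ ω : V, lambdaMin (W ω)) / (⨆ ω : V, lambdaMax (W ω))) *
          (lambdaMin (∑ i ∈ S ∪ Ω, W i) - lambdaMin (∑ i ∈ S, W i)) :=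
  lambdaMin_gramian_submodularity_ratio_general hn W hW hmax
end

section
/- Let V be a finite index set, W_0 an n×n real symmetric positive definite matrix, and for each ω ∈ V let W_ω be an n×n real symmetric positive semidefinite matrix; set W̄_S := W_0 + ∑_{ω ∈ S} W_ω (which is positive definite, hence invertible). Then for every S ⊆ V and ω ∈ V \ S: tr(W̄_S^{−1}) − tr(W̄_{S ∪ {ω}}^{−1}) ≥ tr(W_ω) / λ_1(W̄_V)² ≥ 0. In particular, the set function f(S) := −tr(W̄_S^{−1}) is nondecreasing. -/
open Matrix

/-!
Write `Q = P + B` with `P = W̄_S` and `B = W_ω`, and `L = λ_max(W̄_V)`, so that `0 < P ≤ Q ≤ L`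
in the Loewner order. The resolvent identity `P⁻¹ - Q⁻¹ = Q⁻¹ B Q⁻¹ + (B Q⁻¹)ᵀ P⁻¹ (B Q⁻¹)`
gives `P⁻¹ - Q⁻¹ ≥ Q⁻¹ B Q⁻¹`, whose trace is `tr(Q⁻² B) ≥ tr(B) / L²` because the spectrum
of `Q` lies in `(0, L]`, so `Q⁻² ≥ L⁻²`.
-/

open scoped MatrixOrder

namespace Matrix

section Trace

variable {ι : Type*} [Fintype ι]

lemma trace_mono {A B : Matrix ι ι ℝ} (h : A ≤ B) : A.trace ≤ B.trace :=
  OrderHomClass.mono (tracePositiveLinearMap ι ℝ ℝ) h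

lemma trace_mul_nonneg [DecidableEq ι] {A B : Matrix ι ι ℝ} (hA : 0 ≤ A) (hB : 0 ≤ B) :
    0 ≤ (A * B).trace := by
  obtain ⟨X, rfl⟩ := CStarAlgebra.nonneg_iff_eq_star_mul_self.mp hA
  rw [mul_assoc, trace_mul_comm]
  exact (nonneg_iff_posSemidef.mp (star_right_conjugate_nonneg hB X)).trace_nonneg

lemma trace_mul_le_trace_mul_right [DecidableEq ι] {A A' B : Matrix ι ι ℝ} (hA : A ≤ A')
    (hB : 0 ≤ B) : (A * B).trace ≤ (A' * B).trace := by
  have := trace_mul_nonneg (sub_nonneg.mpr hA) hB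
  rwa [sub_mul, trace_sub, sub_nonneg] at this

end Trace

variable {ι : Type*} [Fintype ι] [DecidableEq ι]

lemma PosDef.inv_add_mul_mul_inv_add_le_inv_sub {P B : Matrix ι ι ℝ} (hP : P.PosDef)
    (hB : 0 ≤ B) : (P + B)⁻¹ * B * (P + B)⁻¹ ≤ P⁻¹ - (P + B)⁻¹ := by
  have hQ : (P + B).PosDef := hP.add_posSemidef (nonneg_iff_posSemidef.mp hB)
  set C := (P + B)⁻¹
  have hC : Cᴴ = C := hQ.inv.isHermitian.eq
  have hunits : IsUnit P ↔ IsUnit (P + B) := iff_of_true hP.isUnit hQ.isUnit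
  have hleft : P⁻¹ - C = P⁻¹ * B * C := by rw [inv_sub_inv hunits, add_sub_cancel_left]
  have hright : P⁻¹ - C = C * B * P⁻¹ := by
    rw [← neg_sub, inv_sub_inv hunits.symm, sub_add_cancel_left, mul_neg, neg_mul, neg_neg]
  have hrem : P⁻¹ - C - C * B * C = star (B * C) * P⁻¹ * (B * C) := by
    rw [star_mul, star_eq_conjTranspose, star_eq_conjTranspose, hC,
      (nonneg_iff_posSemidef.mp hB).isHermitian.eq, hleft, ← sub_mul, ← sub_mul, hright]
    simp only [mul_assoc]
  rw [← sub_nonneg, hrem]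
  exact star_left_conjugate_nonneg hP.inv.posSemidef.nonneg _

lemma PosDef.algebraMap_inv_sq_le_inv_mul_inv {Q : Matrix ι ι ℝ} (hQ : Q.PosDef) {L : ℝ}
    (hL : Q ≤ algebraMap ℝ _ L) : algebraMap ℝ _ (L ^ 2)⁻¹ ≤ Q⁻¹ * Q⁻¹ := by
  have hpos := (StarOrderedRing.isStrictlyPositive_iff_spectrum_pos (R := ℝ) Q).mp
    hQ.isStrictlyPositive
  have hle := (le_algebraMap_iff_spectrum_le (ha := hQ.isHermitian)).mp hL
  have hcont : ContinuousOn (fun x : ℝ => x⁻¹) (spectrum ℝ Q) :=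
    continuousOn_inv₀.mono fun x hx => (hpos x hx).ne'
  rw [nonsing_inv_eq_ringInverse, ← cfc_ringInverse_id (R := ℝ) Q hQ.isUnit, ← cfc_mul ..]
  refine (algebraMap_le_cfc_iff (fun x : ℝ => x⁻¹ * x⁻¹) _ Q (hcont.mul hcont)
    hQ.isHermitian).mpr fun x hx => ?_
  rw [← mul_inv, ← sq]
  exact inv_anti₀ (pow_pos (hpos x hx) 2) (pow_le_pow_left₀ (hpos x hx).le (hle x hx) 2)

lemma PosDef.trace_div_sq_le_trace_inv_sub {P B : Matrix ι ι ℝ} (hP : P.PosDef) (hB : 0 ≤ B)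
    {L : ℝ} (hL : P + B ≤ algebraMap ℝ _ L) :
    B.trace / L ^ 2 ≤ P⁻¹.trace - (P + B)⁻¹.trace := by
  have hQ : (P + B).PosDef := hP.add_posSemidef (nonneg_iff_posSemidef.mp hB)
  calc B.trace / L ^ 2 = (algebraMap ℝ _ (L ^ 2)⁻¹ * B).trace := by
        rw [Algebra.algebraMap_eq_smul_one, smul_mul_assoc, one_mul, trace_smul, smul_eq_mul,
          div_eq_inv_mul]
    _ ≤ ((P + B)⁻¹ * (P + B)⁻¹ * B).trace :=
        trace_mul_le_trace_mul_right (hQ.algebraMap_inv_sq_le_inv_mul_inv hL) hB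
    _ = ((P + B)⁻¹ * B * (P + B)⁻¹).trace := (trace_mul_cycle _ _ _).symm
    _ ≤ (P⁻¹ - (P + B)⁻¹).trace := trace_mono (hP.inv_add_mul_mul_inv_add_le_inv_sub hB)
    _ = P⁻¹.trace - (P + B)⁻¹.trace := trace_sub _ _

lemma IsHermitian.le_algebraMap_lambdaMax {n : ℕ} {M : Matrix (Fin n) (Fin n) ℝ}
    (hM : M.IsHermitian) : M ≤ algebraMap ℝ _ (lambdaMax M) := by
  refine (le_algebraMap_iff_spectrum_le (ha := hM)).mpr fun x hx => ?_
  obtain ⟨i, rfl⟩ := hM.spectrum_real_eq_range_eigenvalues ▸ hx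
  rw [lambdaMax, dif_pos hM]
  exact le_ciSup (Set.finite_range _).bddAbove i

end Matrix

/-- With a base positive definite Gramian `W₀` and positive semidefinite actuator Gramians
`W_ω`, letting `W̄_S = W₀ + ∑_{ω ∈ S} W_ω`, adding an actuator `ω ∉ S` decreases the trace
of the inverse by at least `tr(W_ω) / λ_max(W̄_V)² ≥ 0`; in particular
`S ↦ -tr(W̄_S⁻¹)` is nondecreasing. -/
theorem trace_inv_gramian_monotone
    {n : ℕ} {V : Type*} [Fintype V] [DecidableEq V]
    (W₀ : Matrix (Fin n) (Fin n) ℝ) (hW₀ : W₀.PosDef)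
    (W : V → Matrix (Fin n) (Fin n) ℝ) (hW : ∀ ω, (W ω).PosSemidef) :
    (∀ S : Finset V, ∀ ω ∉ S,
      ((W₀ + ∑ i ∈ S, W i)⁻¹).trace - ((W₀ + ∑ i ∈ insert ω S, W i)⁻¹).trace ≥
        (W ω).trace / (lambdaMax (W₀ + ∑ i ∈ (Finset.univ : Finset V), W i)) ^ 2 ∧
      (W ω).trace / (lambdaMax (W₀ + ∑ i ∈ (Finset.univ : Finset V), W i)) ^ 2 ≥ 0) ∧
    (∀ (S : Finset V) (ω : V),
      -(((W₀ + ∑ i ∈ insert ω S, W i)⁻¹).trace) ≥ -(((W₀ + ∑ i ∈ S, W i)⁻¹).trace)) := by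
  set L := lambdaMax (W₀ + ∑ i ∈ (Finset.univ : Finset V), W i)
  have hsum_nonneg (S : Finset V) : 0 ≤ ∑ i ∈ S, W i :=
    Finset.sum_nonneg fun i _ => (hW i).nonneg
  have hposDef (S : Finset V) : (W₀ + ∑ i ∈ S, W i).PosDef :=
    hW₀.add_posSemidef (nonneg_iff_posSemidef.mp (hsum_nonneg S))
  have hle_L (S : Finset V) : W₀ + ∑ i ∈ S, W i ≤ algebraMap ℝ _ L :=
    (add_le_add_right (Finset.sum_le_sum_of_subset_of_nonneg (Finset.subset_univ S)
      fun i _ _ => (hW i).nonneg) W₀).trans (hposDef _).isHermitian.le_algebraMap_lambdaMax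
  have hgap (S : Finset V) (ω : V) (hω : ω ∉ S) :
      (W ω).trace / L ^ 2 ≤
        ((W₀ + ∑ i ∈ S, W i)⁻¹).trace - ((W₀ + ∑ i ∈ insert ω S, W i)⁻¹).trace := by
    have hL := hle_L (insert ω S)
    rw [Finset.sum_insert hω, ← add_assoc, add_right_comm] at hL ⊢
    exact (hposDef S).trace_div_sq_le_trace_inv_sub (hW ω).nonneg hL
  have hgap_nonneg (ω : V) : 0 ≤ (W ω).trace / L ^ 2 :=
    div_nonneg (hW ω).trace_nonneg (sq_nonneg L)
  refine ⟨fun S ω hω => ⟨hgap S ω hω, hgap_nonneg ω⟩, fun S ω => ?_⟩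
  by_cases hω : ω ∈ S
  · rw [Finset.insert_eq_of_mem hω]
  · linarith [hgap S ω hω, hgap_nonneg ω]
end

section
/- Let V be a nonempty finite index set, W_0 an n×n real symmetric positive definite matrix, and for each ω ∈ V let W_ω be a nonzero n×n real symmetric positive semidefinite matrix; set W̄_S := W_0 + ∑_{ω ∈ S} W_ω and f(S) := −tr(W̄_S^{−1}). Let γ₀ := [min_{ω ∈ V} tr(W_ω) · (min_{ω ∈ V} λ_n(W̄_ω))²] / [max_{ω ∈ V} tr(W_ω) · λ_1(W̄_V)²]. Then γ₀ > 0 and for all Ω, S ⊆ V: ∑_{ω ∈ Ω \ S} [f(S ∪ {ω}) − f(S)] ≥ γ₀ · [f(S ∪ Ω) − f(S)]. In particular, the submodularity ratio of f is at least γ₀. -/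
open Matrix

open scoped MatrixOrder

namespace Matrix

variable {ι : Type*} {A B P Q : Matrix ι ι ℝ} {c : ℝ}

lemma le_of_smul_one_le_smul_one [DecidableEq ι] [Nonempty ι] {d : ℝ}
    (h : c • (1 : Matrix ι ι ℝ) ≤ d • 1) : c ≤ d := by
  simpa using (le_iff.mp h).diag_nonneg (i := Classical.arbitrary ι)

variable [Fintype ι]

lemma trace_mono_s9 (h : P ≤ Q) : P.trace ≤ Q.trace := by
  simpa [trace_sub] using (le_iff.mp h).trace_nonneg

lemma PosSemidef.trace_pos_of_ne_zero (hA : A.PosSemidef) (h : A ≠ 0) : 0 < A.trace :=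
  hA.trace_nonneg.lt_of_ne' (mt hA.trace_eq_zero_iff.mp h)

variable [DecidableEq ι]

lemma trace_mul_le_trace_mul_of_le (h : P ≤ Q) (hB : B.PosSemidef) :
    (P * B).trace ≤ (Q * B).trace := by
  obtain ⟨s, hs, rfl⟩ := CStarAlgebra.nonneg_iff_exists_isSelfAdjoint_and_eq_mul_self.mp hB.nonneg
  have hcycle (X : Matrix ι ι ℝ) : (s * X * s).trace = (X * (s * s)).trace := by
    rw [trace_mul_cycle, trace_mul_comm]
  simpa only [hs.star_eq, hcycle] using trace_mono_s9 (star_left_conjugate_le_conjugate h s)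

namespace PosDef

lemma spectrum_pos (hA : A.PosDef) : ∀ x ∈ spectrum ℝ A, 0 < x :=
  (StarOrderedRing.isStrictlyPositive_iff_spectrum_pos A).mp hA.isStrictlyPositive

lemma inv_mul_inv_eq_cfc (hA : A.PosDef) : A⁻¹ * A⁻¹ = cfc (fun x : ℝ => (x ^ 2)⁻¹) A := by
  rw [cfc_inv (fun x : ℝ => x ^ 2) A fun x hx => (pow_pos (hA.spectrum_pos x hx) 2).ne',
    cfc_pow_id A 2, ← nonsing_inv_eq_ringInverse, sq, Matrix.mul_inv_rev]

lemma continuousOn_inv_sq_spectrum (hA : A.PosDef) :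
    ContinuousOn (fun x : ℝ => (x ^ 2)⁻¹) (spectrum ℝ A) :=
  (continuousOn_pow 2).inv₀ fun x hx => (pow_pos (hA.spectrum_pos x hx) 2).ne'

lemma inv_mul_inv_le_of_smul_one_le (hA : A.PosDef) (hc : 0 < c) (h : c • 1 ≤ A) :
    A⁻¹ * A⁻¹ ≤ (c ^ 2)⁻¹ • 1 := by
  rw [← Algebra.algebraMap_eq_smul_one, algebraMap_le_iff_le_spectrum] at h
  rw [hA.inv_mul_inv_eq_cfc, ← Algebra.algebraMap_eq_smul_one]
  refine cfc_le_algebraMap _ _ A (fun x hx => ?_) hA.continuousOn_inv_sq_spectrum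
  have := h x hx
  gcongr

lemma smul_one_le_inv_mul_inv_of_le_smul_one (hA : A.PosDef) (h : A ≤ c • 1) :
    (c ^ 2)⁻¹ • 1 ≤ A⁻¹ * A⁻¹ := by
  rw [← Algebra.algebraMap_eq_smul_one, le_algebraMap_iff_spectrum_le] at h
  rw [hA.inv_mul_inv_eq_cfc, ← Algebra.algebraMap_eq_smul_one]
  refine algebraMap_le_cfc _ _ A (fun x hx => ?_) hA.continuousOn_inv_sq_spectrum
  have := hA.spectrum_pos x hx
  have := h x hx
  gcongr

lemma inv_sub_inv_add_eq (hA : A.PosDef) (hB : B.PosSemidef) :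
    A⁻¹ - (A + B)⁻¹ = A⁻¹ * B * (A + B)⁻¹ := by
  rw [inv_sub_inv (iff_of_true hA.isUnit (hA.add_posSemidef hB).isUnit), add_sub_cancel_left]

lemma inv_sub_inv_add_eq' (hA : A.PosDef) (hB : B.PosSemidef) :
    A⁻¹ - (A + B)⁻¹ = (A + B)⁻¹ * B * A⁻¹ := by
  rw [← neg_sub, inv_sub_inv (iff_of_true (hA.add_posSemidef hB).isUnit hA.isUnit)]
  noncomm_ring

lemma inv_sub_inv_add_le (hA : A.PosDef) (hB : B.PosSemidef) :
    A⁻¹ - (A + B)⁻¹ ≤ A⁻¹ * B * A⁻¹ := by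
  have hconj : A⁻¹ * B * A⁻¹ - (A⁻¹ - (A + B)⁻¹) =
      star (B * A⁻¹) * (A + B)⁻¹ * (B * A⁻¹) := by
    rw [star_mul, hA.inv.isHermitian.star_eq, hB.isHermitian.star_eq]
    calc A⁻¹ * B * A⁻¹ - (A⁻¹ - (A + B)⁻¹) = A⁻¹ * B * (A⁻¹ - (A + B)⁻¹) := by
          nth_rewrite 1 [hA.inv_sub_inv_add_eq hB]; noncomm_ring
      _ = A⁻¹ * B * (A + B)⁻¹ * (B * A⁻¹) := by
          rw [hA.inv_sub_inv_add_eq' hB]; noncomm_ring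
  rw [← sub_nonneg, hconj]
  exact star_left_conjugate_nonneg (hA.add_posSemidef hB).inv.posSemidef.nonneg _

lemma inv_add_mul_mul_inv_add_le (hA : A.PosDef) (hB : B.PosSemidef) :
    (A + B)⁻¹ * B * (A + B)⁻¹ ≤ A⁻¹ - (A + B)⁻¹ := by
  have hAB := hA.add_posSemidef hB
  have hconj : A⁻¹ - (A + B)⁻¹ - (A + B)⁻¹ * B * (A + B)⁻¹ =
      star (B * (A + B)⁻¹) * A⁻¹ * (B * (A + B)⁻¹) := by
    rw [star_mul, hAB.inv.isHermitian.star_eq, hB.isHermitian.star_eq]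
    calc A⁻¹ - (A + B)⁻¹ - (A + B)⁻¹ * B * (A + B)⁻¹
        = (A + B)⁻¹ * B * (A⁻¹ - (A + B)⁻¹) := by
          nth_rewrite 1 [hA.inv_sub_inv_add_eq' hB]; noncomm_ring
      _ = (A + B)⁻¹ * B * A⁻¹ * (B * (A + B)⁻¹) := by
          rw [hA.inv_sub_inv_add_eq hB]; noncomm_ring
  rw [← sub_nonneg, hconj]
  exact star_left_conjugate_nonneg hA.inv.posSemidef.nonneg _

lemma trace_inv_sub_trace_inv_add_le (hA : A.PosDef) (hB : B.PosSemidef) (hc : 0 < c)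
    (h : c • 1 ≤ A) : A⁻¹.trace - (A + B)⁻¹.trace ≤ B.trace / c ^ 2 :=
  calc A⁻¹.trace - (A + B)⁻¹.trace = (A⁻¹ - (A + B)⁻¹).trace := (trace_sub _ _).symm
    _ ≤ (A⁻¹ * B * A⁻¹).trace := trace_mono_s9 (hA.inv_sub_inv_add_le hB)
    _ = (A⁻¹ * A⁻¹ * B).trace := trace_mul_cycle _ _ _
    _ ≤ ((c ^ 2)⁻¹ • 1 * B).trace :=
      trace_mul_le_trace_mul_of_le (hA.inv_mul_inv_le_of_smul_one_le hc h) hB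
    _ = B.trace / c ^ 2 := by simp [div_eq_inv_mul]

lemma trace_div_sq_le_trace_inv_sub_trace_inv_add (hA : A.PosDef) (hB : B.PosSemidef)
    (h : A + B ≤ c • 1) : B.trace / c ^ 2 ≤ A⁻¹.trace - (A + B)⁻¹.trace :=
  calc B.trace / c ^ 2 = ((c ^ 2)⁻¹ • 1 * B).trace := by simp [div_eq_inv_mul]
    _ ≤ ((A + B)⁻¹ * (A + B)⁻¹ * B).trace := trace_mul_le_trace_mul_of_le
      ((hA.add_posSemidef hB).smul_one_le_inv_mul_inv_of_le_smul_one h) hB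
    _ = ((A + B)⁻¹ * B * (A + B)⁻¹).trace := (trace_mul_cycle _ _ _).symm
    _ ≤ (A⁻¹ - (A + B)⁻¹).trace := trace_mono_s9 (hA.inv_add_mul_mul_inv_add_le hB)
    _ = A⁻¹.trace - (A + B)⁻¹.trace := trace_sub _ _

end PosDef

end Matrix
lemma lt_ciInf_of_finite {ι α : Type*} [Nonempty ι] [Finite ι] [ConditionallyCompleteLinearOrder α]
    {a : α} {f : ι → α} (h : ∀ i, a < f i) : a < ⨅ i, f i := by
  obtain ⟨i, hi⟩ := exists_eq_ciInf_of_finite (f := f)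
  exact hi ▸ h i

section Eigenvalues

variable {n : ℕ} {M N : Matrix (Fin n) (Fin n) ℝ}

lemma lambdaMin_smul_one_le (hM : M.IsHermitian) : lambdaMin M • 1 ≤ M := by
  rw [← Algebra.algebraMap_eq_smul_one, algebraMap_le_iff_le_spectrum (ha := hM.isSelfAdjoint),
    hM.spectrum_real_eq_range_eigenvalues, lambdaMin, dif_pos hM]
  rintro _ ⟨i, rfl⟩
  exact ciInf_le (Finite.bddBelow_range _) i

lemma le_lambdaMax_smul_one (hM : M.IsHermitian) : M ≤ lambdaMax M • 1 := by
  rw [← Algebra.algebraMap_eq_smul_one, le_algebraMap_iff_spectrum_le (ha := hM.isSelfAdjoint),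
    hM.spectrum_real_eq_range_eigenvalues, lambdaMax, dif_pos hM]
  rintro _ ⟨i, rfl⟩
  exact le_ciSup (Finite.bddAbove_range _) i

lemma lambdaMin_pos [NeZero n] (hM : M.PosDef) : 0 < lambdaMin M := by
  obtain ⟨i, hi⟩ := exists_eq_ciInf_of_finite (f := hM.isHermitian.eigenvalues)
  rw [lambdaMin, dif_pos hM.isHermitian, ← hi]
  exact hM.eigenvalues_pos i

lemma lambdaMin_le_lambdaMax_of_le [NeZero n] (hM : M.IsHermitian) (hN : N.IsHermitian)
    (h : M ≤ N) : lambdaMin M ≤ lambdaMax N :=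
  le_of_smul_one_le_smul_one <|
    (lambdaMin_smul_one_le hM).trans (h.trans (le_lambdaMax_smul_one hN))

end Eigenvalues

theorem mul_sub_le_sum_marginal_gains {V : Type*} [DecidableEq V] (f : Finset V → ℝ)
    {γ a b : ℝ} (hγ : 0 ≤ γ) (hγ₁ : γ ≤ 1) (ha : 0 ≤ a) (hab : γ * b ≤ a)
    (hlow : ∀ S ω, ω ∉ S → a ≤ f (insert ω S) - f S)
    (hup : ∀ T ω, T.Nonempty → ω ∉ T → f (insert ω T) - f T ≤ b) (Ω S : Finset V) :
    γ * (f (S ∪ Ω) - f S) ≤ ∑ ω ∈ Ω \ S, (f (insert ω S) - f S) := by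
  suffices key : ∀ R, Disjoint R S →
      γ * (f (S ∪ R) - f S) ≤ ∑ ω ∈ R, (f (insert ω S) - f S) by
    simpa only [Finset.union_sdiff_self_eq_union] using key (Ω \ S) Finset.sdiff_disjoint
  intro R
  induction R using Finset.induction_on with
  | empty => simp
  | insert ω R hωR ih =>
    intro hdisj
    obtain ⟨hωS, hRS⟩ := Finset.disjoint_insert_left.mp hdisj
    have hstep : γ * (f (insert ω (S ∪ R)) - f (S ∪ R)) ≤ f (insert ω S) - f S := by
      rcases R.eq_empty_or_nonempty with rfl | hR
      · have := hlow S ω hωS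
        rw [Finset.union_empty]
        nlinarith
      · have hωSR : ω ∉ S ∪ R := by simp [hωS, hωR]
        calc γ * (f (insert ω (S ∪ R)) - f (S ∪ R)) ≤ γ * b :=
              mul_le_mul_of_nonneg_left (hup _ ω (hR.mono Finset.subset_union_right) hωSR) hγ
          _ ≤ a := hab
          _ ≤ f (insert ω S) - f S := hlow S ω hωS
    rw [Finset.sum_insert hωR, Finset.union_insert]
    linarith [ih hRS]

section Gramian

variable {n : ℕ} {V : Type*} {W₀ : Matrix (Fin n) (Fin n) ℝ} {W : V → Matrix (Fin n) (Fin n) ℝ}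

lemma add_sum_le_add_sum_of_subset (hW : ∀ ω, (W ω).PosSemidef) {S T : Finset V} (h : S ⊆ T) :
    W₀ + ∑ i ∈ S, W i ≤ W₀ + ∑ i ∈ T, W i :=
  add_le_add_right (Finset.sum_le_sum_of_subset_of_nonneg h fun i _ _ => (hW i).nonneg) W₀

lemma posDef_add_sum (hW₀ : W₀.PosDef) (hW : ∀ ω, (W ω).PosSemidef) (S : Finset V) :
    (W₀ + ∑ i ∈ S, W i).PosDef :=
  hW₀.add_posSemidef (posSemidef_sum S fun i _ => hW i)

lemma add_sum_insert [DecidableEq V] {S : Finset V} {ω : V} (hω : ω ∉ S) :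
    W₀ + ∑ i ∈ insert ω S, W i = (W₀ + ∑ i ∈ S, W i) + W ω := by
  rw [Finset.sum_insert hω]
  abel

variable [Fintype V]

lemma iInf_lambdaMin_pos [NeZero n] [Nonempty V] (hW₀ : W₀.PosDef)
    (hW : ∀ ω, (W ω).PosSemidef) : 0 < ⨅ ω, lambdaMin (W₀ + W ω) :=
  lt_ciInf_of_finite fun ω => lambdaMin_pos (hW₀.add_posSemidef (hW ω))

lemma iInf_lambdaMin_le_lambdaMax [NeZero n] [Nonempty V] (hW₀ : W₀.PosDef)
    (hW : ∀ ω, (W ω).PosSemidef) : ⨅ ω, lambdaMin (W₀ + W ω) ≤ lambdaMax (W₀ + ∑ i, W i) := by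
  obtain ⟨ω⟩ := ‹Nonempty V›
  have hle : W₀ + W ω ≤ W₀ + ∑ i, W i := by
    simpa only [Finset.sum_singleton] using
      add_sum_le_add_sum_of_subset hW (Finset.subset_univ {ω})
  exact (ciInf_le (Finite.bddBelow_range _) ω).trans <| lambdaMin_le_lambdaMax_of_le
    (hW₀.add_posSemidef (hW ω)).isHermitian (posDef_add_sum hW₀ hW _).isHermitian hle

variable [DecidableEq V]

lemma iInf_trace_div_sq_le_trace_inv_sub (hW₀ : W₀.PosDef) (hW : ∀ ω, (W ω).PosSemidef)
    {S : Finset V} {ω : V} (hω : ω ∉ S) :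
    (⨅ ω, (W ω).trace) / lambdaMax (W₀ + ∑ i, W i) ^ 2 ≤
      (W₀ + ∑ i ∈ S, W i)⁻¹.trace - (W₀ + ∑ i ∈ insert ω S, W i)⁻¹.trace := by
  have hbound : (W₀ + ∑ i ∈ S, W i) + W ω ≤ lambdaMax (W₀ + ∑ i, W i) • 1 :=
    add_sum_insert hω ▸ (add_sum_le_add_sum_of_subset hW (Finset.subset_univ _)).trans
      (le_lambdaMax_smul_one (posDef_add_sum hW₀ hW _).isHermitian)
  rw [add_sum_insert hω]
  exact (div_le_div_of_nonneg_right (ciInf_le (Finite.bddBelow_range _) ω) (sq_nonneg _)).trans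
    ((posDef_add_sum hW₀ hW S).trace_div_sq_le_trace_inv_sub_trace_inv_add (hW ω) hbound)

lemma trace_inv_sub_le_iSup_trace_div_sq [NeZero n] (hW₀ : W₀.PosDef)
    (hW : ∀ ω, (W ω).PosSemidef) {T : Finset V} {ω ω' : V} (hω : ω ∉ T) (hω' : ω' ∈ T) :
    (W₀ + ∑ i ∈ T, W i)⁻¹.trace - (W₀ + ∑ i ∈ insert ω T, W i)⁻¹.trace ≤
      (⨆ ω, (W ω).trace) / (⨅ ω, lambdaMin (W₀ + W ω)) ^ 2 := by
  have : Nonempty V := ⟨ω⟩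
  have hm := iInf_lambdaMin_pos hW₀ hW
  have hm_le : ⨅ ω, lambdaMin (W₀ + W ω) ≤ lambdaMin (W₀ + W ω') :=
    ciInf_le (Finite.bddBelow_range _) ω'
  have htr_le : (W ω).trace ≤ ⨆ ω, (W ω).trace :=
    le_ciSup (f := fun ω => (W ω).trace) (Finite.bddAbove_range _) ω
  have hbound : lambdaMin (W₀ + W ω') • 1 ≤ W₀ + ∑ i ∈ T, W i := by
    refine (lambdaMin_smul_one_le (hW₀.add_posSemidef (hW ω')).isHermitian).trans ?_
    simpa using add_sum_le_add_sum_of_subset (W₀ := W₀) hW (Finset.singleton_subset_iff.mpr hω')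
  rw [add_sum_insert hω]
  calc _ ≤ (W ω).trace / lambdaMin (W₀ + W ω') ^ 2 :=
        (posDef_add_sum hW₀ hW T).trace_inv_sub_trace_inv_add_le (hW ω) (hm.trans_le hm_le) hbound
    _ ≤ (⨆ ω, (W ω).trace) / (⨅ ω, lambdaMin (W₀ + W ω)) ^ 2 := by
      have := (hW ω).trace_nonneg.trans htr_le
      gcongr

end Gramian

/-- Lower bound `γ₀` on the submodularity ratio of `f(S) = -tr(W̄_S⁻¹)`, where
`W̄_S = W₀ + ∑_{ω ∈ S} W_ω` with `W₀` positive definite and each `W_ω` a nonzero positive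
semidefinite matrix. -/
theorem trace_inv_gramian_submodularity_ratio
    {n : ℕ} {V : Type*} [Fintype V] [DecidableEq V] [Nonempty V]
    (W₀ : Matrix (Fin n) (Fin n) ℝ) (hW₀ : W₀.PosDef)
    (W : V → Matrix (Fin n) (Fin n) ℝ) (hW : ∀ ω, (W ω).PosSemidef)
    (hWne : ∀ ω, W ω ≠ 0)
    (γ₀ : ℝ)
    (hγ₀ : γ₀ = ((⨅ ω : V, (W ω).trace) * (⨅ ω : V, lambdaMin (W₀ + W ω)) ^ 2) /
        ((⨆ ω : V, (W ω).trace) *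
          (lambdaMax (W₀ + ∑ i ∈ (Finset.univ : Finset V), W i)) ^ 2)) :
    0 < γ₀ ∧
    ∀ Ω S : Finset V,
      ∑ ω ∈ Ω \ S,
          (-(((W₀ + ∑ i ∈ insert ω S, W i)⁻¹).trace) - -(((W₀ + ∑ i ∈ S, W i)⁻¹).trace)) ≥
        γ₀ * (-(((W₀ + ∑ i ∈ S ∪ Ω, W i)⁻¹).trace) - -(((W₀ + ∑ i ∈ S, W i)⁻¹).trace)) := by
  obtain ⟨ω₀⟩ := ‹Nonempty V›
  have : NeZero n := ⟨by rintro rfl; exact hWne ω₀ (Subsingleton.elim _ _)⟩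
  set tmin := ⨅ ω, (W ω).trace
  set tmax := ⨆ ω, (W ω).trace
  set m := ⨅ ω, lambdaMin (W₀ + W ω)
  set L := lambdaMax (W₀ + ∑ i, W i)
  have htmin : 0 < tmin := lt_ciInf_of_finite fun ω => (hW ω).trace_pos_of_ne_zero (hWne ω)
  have htmin_le : tmin ≤ tmax := ciInf_le_ciSup (Finite.bddBelow_range _) (Finite.bddAbove_range _)
  have hm : 0 < m := iInf_lambdaMin_pos hW₀ hW
  have hmL : m ≤ L := iInf_lambdaMin_le_lambdaMax hW₀ hW
  have htmax : 0 < tmax := htmin.trans_le htmin_le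
  have hL : 0 < L := hm.trans_le hmL
  have hγ : 0 < γ₀ := by
    rw [hγ₀]
    positivity
  refine ⟨hγ, mul_sub_le_sum_marginal_gains (fun S => -(W₀ + ∑ i ∈ S, W i)⁻¹.trace) hγ.le
    (a := tmin / L ^ 2) (b := tmax / m ^ 2) ?_ (by positivity) ?_ ?_ ?_⟩
  · rw [hγ₀, div_le_one (by positivity)]
    gcongr
  · rw [hγ₀]
    exact le_of_eq (by field_simp)
  · intro S ω hω
    rw [neg_sub_neg]
    exact iInf_trace_div_sq_le_trace_inv_sub hW₀ hW hω
  · rintro T ω ⟨ω', hω'⟩ hω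
    rw [neg_sub_neg]
    exact trace_inv_sub_le_iSup_trace_div_sq hW₀ hW hω hω'
end

section
/- Let V be a finite ground set and f : 2^V → ℝ a nondecreasing set function. Suppose γ, α ∈ (0, 1] are such that (i) ∑_{ω ∈ Ω \ S} ρ_ω(S) ≥ γ · ρ_Ω(S) for all Ω, S ⊆ V, and (ii) ρ_j((S \ {j}) ∪ Ω) ≥ (1 − α) · ρ_j(S \ {j}) for all Ω, S ⊆ V and all j ∈ S \ Ω. Let k be a positive integer and let S_0 = ∅, S_{i+1} = S_i ∪ {e_i}, where e_i ∈ V \ S_i maximizes f(S_i ∪ {e}) − f(S_i) over e ∈ V \ S_i, for i = 0, …, k−1. Then f(S_k) − f(∅) ≥ (1/α)·(1 − e^{−αγ}) · (max{ f(S) : S ⊆ V, |S| ≤ k } − f(∅)). -/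
/-!
Fix a competitor `T` with `|T| ≤ k`, write `ρᵢ = f(Sᵢ₊₁) - f(Sᵢ)` for the greedy gains and put
`Φᵢ = f(T) - f(∅) - ∑_{t<i} wₜ ρₜ`, where `wₜ = 1` if `eₜ ∈ T` and `wₜ = α` otherwise, and
`κᵢ = k - |Sᵢ ∩ T|`. Curvature gives `Φᵢ ≤ f(Sᵢ ∪ T) - f(Sᵢ)`, and the submodularity ratio together
with the greedy choice gives `γ (f(Sᵢ ∪ T) - f(Sᵢ)) ≤ |T \ Sᵢ| ρᵢ ≤ κᵢ ρᵢ`.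

A step with `eᵢ ∈ T` lowers `Φ` by `ρᵢ` and `κ` by one, a step with `eᵢ ∉ T` lowers `Φ` by `αρᵢ`
only. Backward induction on the number `n` of remaining steps shows that the remaining gain
`α ∑ ρₜ` is at least `(1 - (1 - αγ/κ)ⁿ) Φ`; at `i = 0` this is `(1 - (1 - αγ/k)ᵏ) (f(T) - f(∅))`,
and `(1 - αγ/k)ᵏ ≤ e^{-αγ}`.
-/

open Finset

section Recursion

variable {α γ K : ℝ}

lemma one_sub_le_one_sub_div_pow {c : ℝ} {n : ℕ} (hc : 0 ≤ c) (hK : 0 < K) (hcK : c ≤ K)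
    (hn : n ≤ K) : 1 - c ≤ (1 - c / K) ^ n := by
  have hbernoulli := one_add_mul_le_pow (a := -(c / K)) (by linarith [(div_le_one hK).2 hcK]) n
  have hnc : n * (c / K) ≤ c := by
    rw [mul_div_assoc', div_le_iff₀ hK, mul_comm c]
    exact mul_le_mul_of_nonneg_right hn hc
  simp only [mul_neg, ← sub_eq_add_neg] at hbernoulli
  linarith

lemma sub_le_one_sub_pow_sub_mul_one_sub_pow (hα0 : 0 ≤ α) (hα1 : α ≤ 1) (hγ0 : 0 ≤ γ)
    (hγ1 : γ ≤ 1) (n : ℕ) (hn : (n : ℝ) + 1 ≤ K) :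
    γ / K - α * γ / K ≤
      (1 - α * γ / K) ^ (n + 1) - (1 - γ / K) * (1 - α * γ / (K - 1)) ^ n := by
  induction n with
  | zero => simp
  | succ n ih =>
    push_cast at hn
    have hK : 0 < K - 1 := by linarith [n.cast_nonneg (α := ℝ)]
    have hK0 : 0 < K := by linarith
    rw [mul_div_assoc α γ K] at ih ⊢
    have hKb : K * (γ / K) = γ := by field_simp
    have hb0 : 0 ≤ γ / K := by positivity
    have hb1 : γ / K ≤ 1 := by rw [div_le_one hK0]; linarith
    generalize γ / K = b at ih hKb hb0 hb1 ⊢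
    have hxy : (1 - α * b) - (1 - α * γ / (K - 1)) = α * b / (K - 1) := by
      rw [← hKb]; field_simp; ring
    have hyn : 1 - α * γ ≤ (1 - α * γ / (K - 1)) ^ n :=
      one_sub_le_one_sub_div_pow (by positivity) hK (by nlinarith) (by linarith)
    generalize 1 - α * γ / (K - 1) = y at hxy hyn ih ⊢
    have hkey : (K - 1) * b * (1 - α) ≤ (1 - b) * (1 - α * γ) := by
      have := mul_nonneg (sub_nonneg.2 hγ1) (by nlinarith : 0 ≤ 1 - α * b)
      linear_combination this + (1 - α) * hKb
    have hlast : α * b * (b - α * b) ≤ (1 - b) * y ^ n * ((1 - α * b) - y) := by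
      have := mul_le_mul_of_nonneg_right (hkey.trans (mul_le_mul_of_nonneg_left hyn
        (by linarith))) (by positivity : 0 ≤ α * b / (K - 1))
      rw [hxy]
      refine Eq.trans_le ?_ this
      field_simp
    have hsplit : (1 - α * b) ^ (n + 1 + 1) - (1 - b) * y ^ (n + 1) =
        (1 - α * b) * ((1 - α * b) ^ (n + 1) - (1 - b) * y ^ n)
          + (1 - b) * y ^ n * ((1 - α * b) - y) := by ring
    rw [hsplit]
    nlinarith [mul_le_mul_of_nonneg_left (ih (by linarith)) (by nlinarith : 0 ≤ 1 - α * b)]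

lemma one_sub_pow_succ_mul_le_of_step_outside {n : ℕ} (hα0 : 0 ≤ α) (hK : 0 < K)
    (hαγK : α * γ ≤ K) {Φ ρ G : ℝ} (hΦ : 0 ≤ Φ) (hρ : γ * Φ ≤ K * ρ) (hG : 0 ≤ G)
    (ih : 0 ≤ Φ - α * ρ → (1 - (1 - α * γ / K) ^ n) * (Φ - α * ρ) ≤ G) :
    (1 - (1 - α * γ / K) ^ (n + 1)) * Φ ≤ α * ρ + G := by
  have hx : 0 ≤ 1 - α * γ / K := sub_nonneg.2 ((div_le_one hK).2 hαγK)
  have hxn := pow_nonneg hx n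
  have haΦ : α * γ / K * Φ ≤ α * ρ := by
    rw [div_mul_eq_mul_div, div_le_iff₀ hK]
    linear_combination α * hρ
  rcases lt_or_ge (Φ - α * ρ) 0 with hneg | hpos
  · nlinarith [pow_nonneg hx (n + 1)]
  · have := ih hpos
    rw [pow_succ]
    nlinarith [mul_le_mul_of_nonneg_left haΦ hxn]

lemma one_sub_pow_succ_mul_le_of_step_inside {n : ℕ} (hα0 : 0 ≤ α) (hα1 : α ≤ 1)
    (hγ0 : 0 ≤ γ) (hγ1 : γ ≤ 1) (hn : (n : ℝ) + 1 ≤ K) {Φ ρ G : ℝ} (hΦ : 0 ≤ Φ)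
    (hρ : γ * Φ ≤ K * ρ) (hG : 0 ≤ G)
    (ih : 0 ≤ Φ - ρ → (1 - (1 - α * γ / (K - 1)) ^ n) * (Φ - ρ) ≤ G) :
    (1 - (1 - α * γ / K) ^ (n + 1)) * Φ ≤ α * ρ + G := by
  have hK : 0 < K := by linarith [n.cast_nonneg (α := ℝ)]
  have hg : 1 - (1 - α * γ / K) ^ (n + 1) ≤ α := by
    have := one_sub_le_one_sub_div_pow (n := n + 1) (mul_nonneg hα0 hγ0) hK (by nlinarith)
      (by push_cast; linarith)
    nlinarith
  have hbΦ : γ / K * Φ ≤ ρ := by rwa [div_mul_eq_mul_div, div_le_iff₀ hK, mul_comm ρ]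
  rcases lt_or_ge (Φ - ρ) 0 with hneg | hpos
  · nlinarith
  have := ih hpos
  -- The bound is affine in `ρ ∈ [γΦ/K, Φ]`: check `ρ = γΦ/K` or `ρ = Φ`, by the sign of the slope.
  rcases le_or_gt (1 - (1 - α * γ / (K - 1)) ^ n) α with hg' | hg'
  · have hstar := mul_le_mul_of_nonneg_right
      (sub_le_one_sub_pow_sub_mul_one_sub_pow hα0 hα1 hγ0 hγ1 n hn) hΦ
    linear_combination this + hstar + mul_le_mul_of_nonneg_left hbΦ (sub_nonneg.2 hg')
  · nlinarith

theorem le_mul_sum_of_greedy_recursion (hα0 : 0 ≤ α) (hα1 : α ≤ 1) (hγ0 : 0 ≤ γ)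
    (hγ1 : γ ≤ 1) {k : ℕ} {ρ Φ : ℕ → ℝ} {κ : ℕ → ℕ}
    (hρ : ∀ i < k, 0 ≤ ρ i) (hκ : ∀ i < k, k ≤ κ i + i)
    (hΦρ : ∀ i < k, γ * Φ i ≤ κ i * ρ i)
    (hΦκ : ∀ i < k, (Φ (i + 1) = Φ i - ρ i ∧ κ (i + 1) + 1 = κ i) ∨
      (Φ (i + 1) = Φ i - α * ρ i ∧ κ (i + 1) = κ i))
    {i : ℕ} (hi : i ≤ k) (hΦ : 0 ≤ Φ i) :
    (1 - (1 - α * γ / κ i) ^ (k - i)) * Φ i ≤ α * ∑ t ∈ Ico i k, ρ t := by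
  induction hi using Nat.decreasingInduction with
  | self => simp
  | of_succ i hik ih =>
    have hG : 0 ≤ α * ∑ t ∈ Ico (i + 1) k, ρ t :=
      mul_nonneg hα0 (sum_nonneg fun t ht => hρ t (mem_Ico.1 ht).2)
    have hn : ((k - (i + 1) : ℕ) : ℝ) + 1 ≤ κ i := by
      have := hκ i hik
      exact_mod_cast (by omega : k - (i + 1) + 1 ≤ κ i)
    rw [sum_eq_sum_Ico_succ_bot hik, mul_add, show k - i = k - (i + 1) + 1 by omega]
    rcases hΦκ i hik with ⟨hΦ', hκ'⟩ | ⟨hΦ', hκ'⟩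
    · have hκ'' : (κ (i + 1) : ℝ) = κ i - 1 := by
        rw [← hκ']; push_cast; ring
      refine one_sub_pow_succ_mul_le_of_step_inside hα0 hα1 hγ0 hγ1 hn hΦ (hΦρ i hik) hG
        fun h => ?_
      rw [← hκ'', ← hΦ']
      exact ih (hΦ' ▸ h)
    · have hK : (0 : ℝ) < κ i := by linarith [(k - (i + 1) : ℕ).cast_nonneg (α := ℝ)]
      refine one_sub_pow_succ_mul_le_of_step_outside hα0 hK (by nlinarith) hΦ (hΦρ i hik) hG
        fun h => ?_
      rw [← hκ', ← hΦ']
      exact ih (hΦ' ▸ h)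

end Recursion

section GreedySequence

variable {V : Type*} [DecidableEq V] {f : Finset V → ℝ} {S : ℕ → Finset V} {e : ℕ → V} {k : ℕ}

lemma card_le_of_eq_insert (hS0 : S 0 = ∅) (hstep : ∀ i < k, S (i + 1) = insert (e i) (S i))
    {i : ℕ} (hi : i ≤ k) : #(S i) ≤ i := by
  induction i with
  | zero => simp [hS0]
  | succ i ih =>
    rw [hstep i hi]
    exact (card_insert_le _ _).trans (by have := ih (by omega); omega)

lemma sub_sum_le_apply_union_sub {α : ℝ} (hcurv : ∀ Ω S : Finset V, ∀ j ∈ S \ Ω,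
      f (S ∪ Ω) - f ((S.erase j) ∪ Ω) ≥ (1 - α) * (f S - f (S.erase j)))
    (hS0 : S 0 = ∅) (hstep : ∀ i < k, S (i + 1) = insert (e i) (S i))
    (hmem : ∀ i < k, e i ∉ S i) (T : Finset V) {i : ℕ} (hi : i ≤ k) :
    f T - f ∅ - ∑ t ∈ range i, (if e t ∈ T then 1 else α) * (f (S (t + 1)) - f (S t))
      ≤ f (S i ∪ T) - f (S i) := by
  induction i with
  | zero => simp [hS0]
  | succ i ih =>
    have hik : i < k := by omega
    have ih := ih hik.le
    rw [sum_range_succ, hstep i hik]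
    split_ifs with hT
    · rw [insert_union, insert_eq_of_mem (mem_union_right _ hT)]
      linarith
    · have h := hcurv (S i ∪ T) (insert (e i) (S i)) (e i) (by simp [hmem i hik, hT])
      rw [erase_insert (hmem i hik), insert_union, union_left_idem] at h
      rw [insert_union]
      linarith

lemma mul_sub_le_card_mul_of_max_gain {γ : ℝ} {A T : Finset V} {x : V}
    (hratio : ∑ y ∈ T \ A, (f (insert y A) - f A) ≥ γ * (f (A ∪ T) - f A))
    (hx : ∀ y ∉ A, f (insert y A) - f A ≤ f (insert x A) - f A) :
    γ * (f (A ∪ T) - f A) ≤ #(T \ A) * (f (insert x A) - f A) := by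
  refine hratio.trans ?_
  rw [← nsmul_eq_mul]
  exact sum_le_card_nsmul _ _ _ fun y hy => hx y (mem_sdiff.1 hy).2

lemma mul_sub_sum_le_mul_gain {α γ : ℝ} (hγ0 : 0 ≤ γ) (hmono : Monotone f)
    (hratio : ∀ Ω S : Finset V, ∑ ω ∈ Ω \ S, (f (insert ω S) - f S) ≥ γ * (f (S ∪ Ω) - f S))
    (hcurv : ∀ Ω S : Finset V, ∀ j ∈ S \ Ω,
      f (S ∪ Ω) - f ((S.erase j) ∪ Ω) ≥ (1 - α) * (f S - f (S.erase j)))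
    (hS0 : S 0 = ∅) (hstep : ∀ i < k, S (i + 1) = insert (e i) (S i))
    (hmem : ∀ i < k, e i ∉ S i)
    (hgreedy : ∀ i < k, ∀ x ∉ S i,
      f (insert (e i) (S i)) - f (S i) ≥ f (insert x (S i)) - f (S i))
    {T : Finset V} (hT : #T ≤ k) {i : ℕ} (hi : i < k) :
    γ * (f T - f ∅ - ∑ t ∈ range i, (if e t ∈ T then 1 else α) * (f (S (t + 1)) - f (S t)))
      ≤ (k - #(S i ∩ T) : ℕ) * (f (S (i + 1)) - f (S i)) := by
  have hcard : (#(T \ S i) : ℝ) ≤ (k - #(S i ∩ T) : ℕ) := by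
    rw [card_sdiff]; exact_mod_cast Nat.sub_le_sub_right hT _
  have hgain : 0 ≤ f (insert (e i) (S i)) - f (S i) := sub_nonneg.2 (hmono (subset_insert _ _))
  rw [hstep i hi]
  calc _ ≤ γ * (f (S i ∪ T) - f (S i)) :=
        mul_le_mul_of_nonneg_left (sub_sum_le_apply_union_sub hcurv hS0 hstep hmem T hi.le) hγ0
    _ ≤ #(T \ S i) * (f (insert (e i) (S i)) - f (S i)) :=
        mul_sub_le_card_mul_of_max_gain (hratio T (S i)) (hgreedy i hi)
    _ ≤ _ := mul_le_mul_of_nonneg_right hcard hgain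

theorem one_sub_pow_mul_le_greedy_gain {α γ : ℝ} (hα0 : 0 ≤ α) (hα1 : α ≤ 1) (hγ0 : 0 ≤ γ)
    (hγ1 : γ ≤ 1) (hmono : Monotone f)
    (hratio : ∀ Ω S : Finset V, ∑ ω ∈ Ω \ S, (f (insert ω S) - f S) ≥ γ * (f (S ∪ Ω) - f S))
    (hcurv : ∀ Ω S : Finset V, ∀ j ∈ S \ Ω,
      f (S ∪ Ω) - f ((S.erase j) ∪ Ω) ≥ (1 - α) * (f S - f (S.erase j)))
    (hS0 : S 0 = ∅) (hstep : ∀ i < k, S (i + 1) = insert (e i) (S i))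
    (hmem : ∀ i < k, e i ∉ S i)
    (hgreedy : ∀ i < k, ∀ x ∉ S i,
      f (insert (e i) (S i)) - f (S i) ≥ f (insert x (S i)) - f (S i))
    {T : Finset V} (hT : #T ≤ k) :
    (1 - (1 - α * γ / k) ^ k) * (f T - f ∅) ≤ α * (f (S k) - f ∅) := by
  have hcard (i : ℕ) (hi : i ≤ k) : #(S i ∩ T) ≤ i :=
    (card_le_card inter_subset_left).trans (card_le_of_eq_insert hS0 hstep hi)
  have hbound := le_mul_sum_of_greedy_recursion hα0 hα1 hγ0 hγ1
    (ρ := fun t => f (S (t + 1)) - f (S t))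
    (Φ := fun i =>
      f T - f ∅ - ∑ t ∈ range i, (if e t ∈ T then 1 else α) * (f (S (t + 1)) - f (S t)))
    (κ := fun i => k - #(S i ∩ T))
    (fun i hi => by simpa [hstep i hi] using hmono (subset_insert (e i) (S i)))
    (fun i hi => by have := hcard i hi.le; omega)
    (fun i hi => mul_sub_sum_le_mul_gain hγ0 hmono hratio hcurv hS0 hstep hmem hgreedy hT hi)
    (fun i hi => by
      simp only [sum_range_succ, hstep i hi]
      by_cases heT : e i ∈ T
      · refine .inl ⟨by simp [heT]; ring, ?_⟩
        rw [insert_inter_of_mem heT, card_insert_of_notMem fun h => hmem i hi (mem_inter.1 h).1]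
        have := hcard i hi.le
        omega
      · exact .inr ⟨by simp [heT]; ring, by rw [insert_inter_of_notMem heT]⟩)
    (Nat.zero_le k) (by simpa using hmono (empty_subset T))
  simpa [hS0, ← range_eq_Ico, sum_range_sub (fun t => f (S t))] using hbound

end GreedySequence

theorem greedy_nonsubmodular_bound_non_normalized_general
    {V : Type*} [DecidableEq V]
    (f : Finset V → ℝ)
    (hmono : ∀ (A : Finset V) (s : V), f (insert s A) ≥ f A)
    (γ α : ℝ) (hγ0 : 0 < γ) (hγ1 : γ ≤ 1) (hα0 : 0 < α) (hα1 : α ≤ 1)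
    (hratio : ∀ Ω S : Finset V,
      ∑ ω ∈ Ω \ S, (f (insert ω S) - f S) ≥ γ * (f (S ∪ Ω) - f S))
    (hcurv : ∀ Ω S : Finset V, ∀ j ∈ S \ Ω,
      f (S ∪ Ω) - f ((S.erase j) ∪ Ω) ≥ (1 - α) * (f S - f (S.erase j)))
    (k : ℕ) (hk : 0 < k)
    (S : ℕ → Finset V) (e : ℕ → V)
    (hS0 : S 0 = ∅)
    (hstep : ∀ i < k, S (i + 1) = insert (e i) (S i))
    (hmem : ∀ i < k, e i ∉ S i)
    (hgreedy : ∀ i < k, ∀ x ∉ S i,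
      f (insert (e i) (S i)) - f (S i) ≥ f (insert x (S i)) - f (S i)) :
    ∀ T : Finset V, T.card ≤ k →
      f (S k) - f ∅ ≥ (1 / α) * (1 - Real.exp (-(α * γ))) * (f T - f ∅) := by
  intro T hT
  have hf : Monotone f := monotone_iff_forall_le_insert.2 fun A s _ => hmono A s
  have hαγk : α * γ ≤ k :=
    (mul_le_one₀ hα1 hγ0.le hγ1).trans (Nat.one_le_cast.2 hk)
  rw [ge_iff_le, one_div_mul_eq_div, div_mul_eq_mul_div, div_le_iff₀' hα0]
  calc (1 - Real.exp (-(α * γ))) * (f T - f ∅) ≤ (1 - (1 - α * γ / k) ^ k) * (f T - f ∅) :=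
        mul_le_mul_of_nonneg_right (by linarith [Real.one_sub_div_pow_le_exp_neg hαγk])
          (sub_nonneg.2 (hf (empty_subset T)))
    _ ≤ α * (f (S k) - f ∅) :=
        one_sub_pow_mul_le_greedy_gain hα0.le hα1 hγ0.le hγ1 hf hratio hcurv hS0 hstep hmem
          hgreedy hT

/-- Greedy guarantee for a nondecreasing (not necessarily normalized) set function with
submodularity ratio at least `γ` and curvature at most `α`: the greedy gain over `f ∅`
is at least a `(1/α)·(1 - e^{-αγ})` fraction of the optimal gain over `f ∅`. -/
theorem greedy_nonsubmodular_bound_non_normalized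
    {V : Type*} [Fintype V] [DecidableEq V]
    (f : Finset V → ℝ)
    (hmono : ∀ (A : Finset V) (s : V), f (insert s A) ≥ f A)
    (γ α : ℝ) (hγ0 : 0 < γ) (hγ1 : γ ≤ 1) (hα0 : 0 < α) (hα1 : α ≤ 1)
    (hratio : ∀ Ω S : Finset V,
      ∑ ω ∈ Ω \ S, (f (insert ω S) - f S) ≥ γ * (f (S ∪ Ω) - f S))
    (hcurv : ∀ Ω S : Finset V, ∀ j ∈ S \ Ω,
      f (S ∪ Ω) - f ((S.erase j) ∪ Ω) ≥ (1 - α) * (f S - f (S.erase j)))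
    (k : ℕ) (hk : 0 < k)
    (S : ℕ → Finset V) (e : ℕ → V)
    (hS0 : S 0 = ∅)
    (hstep : ∀ i < k, S (i + 1) = insert (e i) (S i))
    (hmem : ∀ i < k, e i ∉ S i)
    (hgreedy : ∀ i < k, ∀ x ∉ S i,
      f (insert (e i) (S i)) - f (S i) ≥ f (insert x (S i)) - f (S i)) :
    ∀ T : Finset V, T.card ≤ k →
      f (S k) - f ∅ ≥ (1 / α) * (1 - Real.exp (-(α * γ))) * (f T - f ∅) :=
  greedy_nonsubmodular_bound_non_normalized_general f hmono γ α hγ0 hγ1 hα0 hα1 hratio hcurv k hk S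
    e hS0 hstep hmem hgreedy
end
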